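/- For every nonnegative integer n, the ratio B_{2n}(t)/B_{2n+1}(t) is strictly decreasing in t on the interval (0, 1/2) and also strictly decreasing on (1/2, 1). -/

import Mathlib

open Set Real Filter

/-!
By induction, `(-1)^(n+1) B_{2n+1} > 0` on `(0, 1/2)`: the function `(-1)^(n+2) B_{2n+3}` vanishes
at `0` and `1/2`, and its second derivative is a negative multiple of `(-1)^(n+1) B_{2n+1}`, so it
is strictly concave on `[0, 1/2]` and hence positive inside. Consequently
`B_{2n-1} B_{2n+1} < 0` on `(0, 1/2)`, and by the reflection `B_k(1-t) = (-1)^k B_k(t)` also on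
`(1/2, 1)`. The derivative of `B_{2n} / B_{2n+1}` is
`(2n B_{2n-1} B_{2n+1} - (2n+1) B_{2n}^2) / B_{2n+1}^2`, which is therefore negative on both
intervals.
-/

noncomputable def B (n : ℕ) (t : ℝ) : ℝ := Polynomial.aeval t (Polynomial.bernoulli n)

noncomputable def Bnum (n : ℕ) : ℝ := ((bernoulli n : ℚ) : ℝ)

theorem B_eq_bernoulliFun : B = bernoulliFun := by
  ext n t
  rw [B, bernoulliFun, Polynomial.eval_map_algebraMap]

theorem bernoulliFun_eval_zero_of_odd {k : ℕ} (hk : Odd k) (hk1 : 1 < k) :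
    bernoulliFun k 0 = 0 := by
  rw [bernoulliFun_eval_zero, bernoulli_eq_zero_of_odd hk hk1, Rat.cast_zero]

theorem iterate_deriv_two_const_mul_bernoulliFun (k : ℕ) (c x : ℝ) :
    deriv^[2] (fun t => c * bernoulliFun (k + 2) t) x =
      c * ((k + 2) * (k + 1) * bernoulliFun k x) := by
  simp only [Function.iterate_succ, Function.iterate_zero, Function.comp_apply, id,
    deriv_const_mul_field', deriv_bernoulliFun]
  push_cast
  ring

theorem neg_one_pow_mul_bernoulliFun_odd_pos (n : ℕ) {t : ℝ} (ht : t ∈ Ioo (0 : ℝ) (1 / 2)) :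
    0 < (-1) ^ (n + 1) * bernoulliFun (2 * n + 1) t := by
  induction n generalizing t with
  | zero =>
    norm_num [bernoulliFun_one]
    linarith [ht.2]
  | succ k ih =>
    rw [show 2 * (k + 1) + 1 = 2 * k + 1 + 2 by ring]
    set h : ℝ → ℝ := fun t => (-1) ^ (k + 1 + 1) * bernoulliFun (2 * k + 1 + 2) t
    have hconc : StrictConcaveOn ℝ (Icc 0 (1 / 2)) h := by
      refine strictConcaveOn_of_deriv2_neg (convex_Icc _ _) (by fun_prop) fun x hx => ?_
      rw [interior_Icc] at hx
      have hcoef : (0 : ℝ) < (2 * k + 1 + 2) * (2 * k + 1 + 1) := by positivity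
      rw [iterate_deriv_two_const_mul_bernoulliFun, pow_succ]
      push_cast
      nlinarith [mul_pos hcoef (ih hx)]
    have h0 : h 0 = 0 := by
      simp [h, bernoulliFun_eval_zero_of_odd (k := 2 * k + 1 + 2) ⟨k + 1, by ring⟩ (by omega)]
    have hhalf : h (1 / 2) = 0 := by
      simp [h, show 2 * k + 1 + 2 = 2 * (k + 1) + 1 by ring, bernoulliFun_eval_half_eq_zero]
    have hpos := hconc.lt_on_openSegment (left_mem_Icc.2 (by norm_num)) (right_mem_Icc.2 (by norm_num))
      (by norm_num) (by rwa [openSegment_eq_Ioo (by norm_num)])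
    rwa [h0, hhalf, min_self] at hpos

theorem bernoulliFun_odd_mul_succ_neg (n : ℕ) {t : ℝ}
    (ht : t ∈ Ioo (0 : ℝ) (1 / 2) ∪ Ioo (1 / 2) 1) :
    bernoulliFun (2 * n + 1) t * bernoulliFun (2 * (n + 1) + 1) t < 0 := by
  wlog hlt : t < 1 / 2 generalizing t
  · have hrefl := this (t := 1 - t) (.inl ⟨by grind, by grind⟩) (by grind)
    rwa [bernoulliFun_eval_one_sub, bernoulliFun_eval_one_sub, Odd.neg_one_pow ⟨n, rfl⟩,
      Odd.neg_one_pow ⟨n + 1, rfl⟩, neg_one_mul, neg_one_mul, neg_mul_neg] at hrefl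
  have ht' : t ∈ Ioo (0 : ℝ) (1 / 2) := by grind
  have h1 := neg_one_pow_mul_bernoulliFun_odd_pos n ht'
  have h2 := neg_one_pow_mul_bernoulliFun_odd_pos (n + 1) ht'
  rw [pow_succ (-1 : ℝ) (n + 1)] at h2
  have hsq : ((-1 : ℝ) ^ (n + 1)) ^ 2 = 1 := by rw [← pow_mul, pow_mul', neg_one_sq, one_pow]
  nlinarith [mul_pos h1 h2]

theorem hasDerivAt_bernoulliFun_div_succ (k : ℕ) {t : ℝ} (ht : bernoulliFun (k + 1) t ≠ 0) :
    HasDerivAt (fun t => bernoulliFun k t / bernoulliFun (k + 1) t)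
      ((k * bernoulliFun (k - 1) t * bernoulliFun (k + 1) t
        - (k + 1) * bernoulliFun k t ^ 2) / bernoulliFun (k + 1) t ^ 2) t := by
  refine ((hasDerivAt_bernoulliFun k t).fun_div
    (hasDerivAt_bernoulliFun (k + 1) t) ht).congr_deriv ?_
  push_cast
  ring

theorem strictAntiOn_bernoulliFun_even_div_odd (n : ℕ) {D : Set ℝ} (hD : Convex ℝ D)
    (hDsub : D ⊆ Ioo (0 : ℝ) (1 / 2) ∪ Ioo (1 / 2) 1) :
    StrictAntiOn (fun t => bernoulliFun (2 * n) t / bernoulliFun (2 * n + 1) t) D := by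
  have hne : ∀ t ∈ D, bernoulliFun (2 * n + 1) t ≠ 0 := fun t ht =>
    left_ne_zero_of_mul (bernoulliFun_odd_mul_succ_neg n (hDsub ht)).ne
  refine strictAntiOn_of_deriv_neg hD
    (fun t ht =>
      (hasDerivAt_bernoulliFun_div_succ (2 * n) (hne t ht)).continuousAt.continuousWithinAt)
    fun t ht => ?_
  have htD := interior_subset ht
  rw [(hasDerivAt_bernoulliFun_div_succ (2 * n) (hne t htD)).deriv]
  refine div_neg_of_neg_of_pos ?_ (pow_two_pos_of_ne_zero (hne t htD))
  rcases n with _ | m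
  · norm_num
  · have hprod := bernoulliFun_odd_mul_succ_neg m (hDsub htD)
    rw [show 2 * (m + 1) - 1 = 2 * m + 1 by omega]
    push_cast
    nlinarith [sq_nonneg (bernoulliFun (2 * (m + 1)) t)]

theorem stmt3 (n : ℕ) :
    StrictAntiOn (fun t : ℝ => B (2*n) t / B (2*n+1) t) (Ioo (0:ℝ) (1/2)) ∧
    StrictAntiOn (fun t : ℝ => B (2*n) t / B (2*n+1) t) (Ioo (1/2:ℝ) 1) := by
  rw [B_eq_bernoulliFun]
  exact ⟨strictAntiOn_bernoulliFun_even_div_odd n (convex_Ioo _ _) subset_union_left,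
    strictAntiOn_bernoulliFun_even_div_odd n (convex_Ioo _ _) subset_union_right⟩
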